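/- Every eigenvalue μ of the renormalized symmetric Laplacian L̂_sym = I − (D+I)^{-1/2} (A+I) (D+I)^{-1/2} satisfies 0 ≤ μ < 2. -/

import Mathlib

open Matrix BigOperators

/-!
Substituting `y = D̃^{-1/2} u` turns `⟨u, L̂_sym u⟩` into `⟨y, (D - A) y⟩` and `⟨u, (2 - L̂_sym) u⟩`
into `⟨y, (D + A) y⟩ + 2 ⟨y, y⟩`, while `⟨u, u⟩ = ⟨y, D̃ y⟩ > 0`. Both `⟨y, (D ∓ A) y⟩` are
nonnegative since `∑ᵢⱼ Aᵢⱼ (yᵢ ± yⱼ)² = 2 (⟨y, D y⟩ ± ⟨y, A y⟩)`; the self-loops contribute the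
strictly positive `2 ⟨y, y⟩`, which makes the upper bound strict.
-/

theorem dotProduct_self_eq_sum_mul_sq_one_div_sqrt {ι : Type*} [Fintype ι] {w : ι → ℝ}
    (hw : ∀ i, 0 < w i) (u : ι → ℝ) : u ⬝ᵥ u = ∑ i, w i * (1 / √(w i) * u i) ^ 2 := by
  refine Finset.sum_congr rfl fun i _ => ?_
  rw [mul_pow, div_pow, Real.sq_sqrt (hw i).le]
  field_simp [(hw i).ne']

namespace Matrix

variable {ι R : Type*} [Fintype ι]

theorem dotProduct_diagonal_mul_mul_diagonal_mulVec [CommSemiring R] [DecidableEq ι]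
    (s : ι → R) (M : Matrix ι ι R) (u : ι → R) :
    u ⬝ᵥ (diagonal s * M * diagonal s) *ᵥ u = (s * u) ⬝ᵥ M *ᵥ (s * u) := by
  have hsu : ∀ v, diagonal s *ᵥ v = s * v := fun v => funext fun i => mulVec_diagonal s v i
  rw [← mulVec_mulVec, ← mulVec_mulVec, hsu, hsu]
  exact Finset.sum_congr rfl fun i _ => by simp only [Pi.mul_apply]; ring

variable {A : Matrix ι ι ℝ} {d : ι → ℝ}

theorem sum_sum_mul_add_mul_sq (hA : A.IsSymm) (hd : ∀ i, d i = ∑ j, A i j) (c : ℝ)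
    (y : ι → ℝ) :
    ∑ i, ∑ j, A i j * (y i + c * y j) ^ 2 =
      (1 + c ^ 2) * ∑ i, d i * y i ^ 2 + 2 * c * (y ⬝ᵥ A *ᵥ y) := by
  have hleft : ∑ i, ∑ j, A i j * y i ^ 2 = ∑ i, d i * y i ^ 2 := by
    simp_rw [← Finset.sum_mul, ← hd]
  have hright : ∑ i, ∑ j, A i j * y j ^ 2 = ∑ i, d i * y i ^ 2 := by
    rw [Finset.sum_comm, ← hleft]
    simp_rw [hA.apply]
  have hcross : ∑ i, ∑ j, A i j * (y i * y j) = y ⬝ᵥ A *ᵥ y := by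
    simp_rw [dotProduct, mulVec, dotProduct, Finset.mul_sum]
    exact Finset.sum_congr rfl fun i _ => Finset.sum_congr rfl fun j _ => by ring
  calc ∑ i, ∑ j, A i j * (y i + c * y j) ^ 2
      = ∑ i, ∑ j, A i j * y i ^ 2 + c ^ 2 * ∑ i, ∑ j, A i j * y j ^ 2
          + 2 * c * ∑ i, ∑ j, A i j * (y i * y j) := by
        simp_rw [Finset.mul_sum, ← Finset.sum_add_distrib]
        exact Finset.sum_congr rfl fun i _ => Finset.sum_congr rfl fun j _ => by ring
    _ = _ := by rw [hleft, hright, hcross]; ring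

theorem abs_dotProduct_mulVec_le (hA : A.IsSymm) (hA0 : ∀ i j, 0 ≤ A i j)
    (hd : ∀ i, d i = ∑ j, A i j) (y : ι → ℝ) :
    |y ⬝ᵥ A *ᵥ y| ≤ ∑ i, d i * y i ^ 2 := by
  have hnonneg : ∀ c : ℝ, 0 ≤ ∑ i, ∑ j, A i j * (y i + c * y j) ^ 2 := fun c =>
    Finset.sum_nonneg fun i _ => Finset.sum_nonneg fun j _ => mul_nonneg (hA0 i j) (sq_nonneg _)
  have hminus := sum_sum_mul_add_mul_sq hA hd (-1) y ▸ hnonneg (-1)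
  have hplus := sum_sum_mul_add_mul_sq hA hd 1 y ▸ hnonneg 1
  rw [abs_le]
  constructor <;> linarith

end Matrix

theorem renormalized_sym_laplacian_eigenvalue_bounds_general
    (N : ℕ) (A : Matrix (Fin N) (Fin N) ℝ)
    (hsym : A.IsSymm)
    (h01 : ∀ i j, A i j = 0 ∨ A i j = 1)
    (d : Fin N → ℝ) (hd : ∀ i, d i = ∑ j, A i j)
    (Lhatsym : Matrix (Fin N) (Fin N) ℝ)
    (hLhatsym : Lhatsym = 1 - Matrix.diagonal (fun i => 1 / Real.sqrt (d i + 1)) *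
        (A + 1) * Matrix.diagonal (fun i => 1 / Real.sqrt (d i + 1))) :
    ∀ (mu : ℝ) (u : Fin N → ℝ), u ≠ 0 → Lhatsym.mulVec u = mu • u →
      0 ≤ mu ∧ mu < 2 := by
  intro mu u hu hEq
  have hA0 : ∀ i j, 0 ≤ A i j := fun i j => by rcases h01 i j with h | h <;> simp [h]
  have hd1 : ∀ i, 0 < d i + 1 := fun i => by
    linarith [hd i ▸ Finset.sum_nonneg fun j _ => hA0 i j]
  set s : Fin N → ℝ := fun i => 1 / Real.sqrt (d i + 1)
  have hs0 : ∀ i, s i ≠ 0 := fun i => one_div_ne_zero (Real.sqrt_pos.mpr (hd1 i)).ne'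
  set y := s * u
  have hy : y ≠ 0 := fun h => hu <| funext fun i =>
    (mul_eq_zero.mp (congrFun h i)).resolve_left (hs0 i)
  have huu : u ⬝ᵥ u = ∑ i, d i * y i ^ 2 + y ⬝ᵥ y := by
    rw [dotProduct_self_eq_sum_mul_sq_one_div_sqrt hd1 u]
    simp only [dotProduct, add_one_mul, Finset.sum_add_distrib, sq]
    rfl
  have hLu : u ⬝ᵥ Lhatsym *ᵥ u = u ⬝ᵥ u - (y ⬝ᵥ A *ᵥ y + y ⬝ᵥ y) := by
    rw [hLhatsym, sub_mulVec, one_mulVec, dotProduct_sub,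
      dotProduct_diagonal_mul_mul_diagonal_mulVec, add_mulVec, one_mulVec, dotProduct_add]
  have hRayleigh : u ⬝ᵥ Lhatsym *ᵥ u = mu * (u ⬝ᵥ u) := by
    rw [hEq, dotProduct_smul, smul_eq_mul]
  have hyy : 0 < y ⬝ᵥ y := lt_of_le_of_ne (Finset.sum_nonneg fun i _ => mul_self_nonneg _)
    (Ne.symm (dotProduct_self_eq_zero.not.mpr hy))
  obtain ⟨hlow, hupp⟩ := abs_le.mp (abs_dotProduct_mulVec_le hsym hA0 hd y)
  constructor <;> nlinarith

/-- Every eigenvalue `μ` of the renormalized symmetric Laplacian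
`L̂_sym = I − (D+I)^{-1/2} (A+I) (D+I)^{-1/2}` satisfies `0 ≤ μ < 2`. -/
theorem renormalized_sym_laplacian_eigenvalue_bounds
    (N : ℕ) (A : Matrix (Fin N) (Fin N) ℝ)
    (hsym : A.IsSymm) (hdiag : ∀ i, A i i = 0)
    (h01 : ∀ i j, A i j = 0 ∨ A i j = 1)
    (d : Fin N → ℝ) (hd : ∀ i, d i = ∑ j, A i j)
    (Lhatsym : Matrix (Fin N) (Fin N) ℝ)
    (hLhatsym : Lhatsym = 1 - Matrix.diagonal (fun i => 1 / Real.sqrt (d i + 1)) *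
        (A + 1) * Matrix.diagonal (fun i => 1 / Real.sqrt (d i + 1))) :
    ∀ (mu : ℝ) (u : Fin N → ℝ), u ≠ 0 → Lhatsym.mulVec u = mu • u →
      0 ≤ mu ∧ mu < 2 :=
  renormalized_sym_laplacian_eigenvalue_bounds_general N A hsym h01 d hd Lhatsym hLhatsym
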